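/- arXiv:2111.03513 — 3 statements merged into one kernel-verified Lean document; each statement's English description precedes it below -/
import Mathlib

section
/- Let G be a finite group of orthogonal transformations of ℝ^N generated by reflections σ_α, α ∈ R, for a normalized root system R, and let d(x,y) = min_{σ∈G} ‖x − σ(y)‖. If x, y ∈ ℝ^N satisfy ‖x − y‖ ≤ ‖x − σ_α(y)‖ for every α ∈ R, then d(x,y) = ‖x − y‖. -/
open scoped RealInnerProductSpace
noncomputable section

/-- `ℝ^N` with the Euclidean structure. -/
abbrev Euc (N : ℕ) := EuclideanSpace ℝ (Fin N)

/-- The reflection `σ_α` in the hyperplane orthogonal to `α`. -/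
def sigmaRefl {N : ℕ} (α : Euc N) : Euc N ≃ₗᵢ[ℝ] Euc N :=
  Submodule.reflection (ℝ ∙ α)ᗮ

/-- The orbit distance `d(x,y) = min_{σ ∈ G} ‖x − σ(y)‖`. -/
def orbDist {N : ℕ} (G : Subgroup (Euc N ≃ₗᵢ[ℝ] Euc N)) (x y : Euc N) : ℝ :=
  ⨅ σ : G, ‖x - (σ : Euc N ≃ₗᵢ[ℝ] Euc N) y‖

/-- The hypotheses defining a normalized root system. -/
structure IsNormalizedRootSystem {N : ℕ} (R : Finset (Euc N)) : Prop where
  ne_zero : (0 : Euc N) ∉ R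
  neg_mem : ∀ α ∈ R, -α ∈ R
  smul_mem : ∀ α ∈ R, ∀ c : ℝ, c • α ∈ R → c • α = α ∨ c • α = -α
  refl_mem : ∀ α ∈ R, ∀ β ∈ R, sigmaRefl α β ∈ R
  norm_eq : ∀ α ∈ R, ‖α‖ = Real.sqrt 2

/-- The Coxeter (reflection) group generated by the reflections `σ_α`, `α ∈ R`. -/
def coxeterGroup {N : ℕ} (R : Finset (Euc N)) : Subgroup (Euc N ≃ₗᵢ[ℝ] Euc N) :=
  Subgroup.closure ((fun α => sigmaRefl α) '' (R : Set (Euc N)))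


/-!
Perturbing `x + y` in a generic direction gives a regular vector `e` whose closed Weyl chamber `K`
contains both `x` and `y`. Take as simple roots a minimal set of positive roots whose cone contains
all positive roots; a simple reflection then permutes the other positive roots, the simple
reflections generate the group, and the exchange condition holds. Induction on word length then
shows that `K` meets each orbit at most once. Finally, among the orbit points `z` with
`⟪x, w y⟫ ≤ ⟪x, z⟫` one of greatest height `⟪e, z⟫` lies in `K`, since reflecting in a positive
root that pairs negatively with `z` would raise it; so it is `y`, whence `⟪x, w y⟫ ≤ ⟪x, y⟫`.
-/

open Filter Topology

section Cones

variable {E : Type*} [NormedAddCommGroup E] [InnerProductSpace ℝ E]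

lemma inner_nonneg_of_mem_hull {S : Set E} {e u : E} (he : ∀ s ∈ S, 0 ≤ ⟪e, s⟫)
    (hu : u ∈ PointedCone.hull ℝ S) : 0 ≤ ⟪e, u⟫ := by
  induction hu using Submodule.span_induction with
  | mem s hs => exact he s hs
  | zero => simp
  | add u v _ _ hu hv => rw [inner_add_right]; positivity
  | smul c u _ hu => rw [← Nonneg.coe_smul, real_inner_smul_right]; exact mul_nonneg c.2 hu

lemma eq_zero_of_mem_hull_of_inner_eq_zero {S : Set E} {e u : E} (he : ∀ s ∈ S, 0 < ⟪e, s⟫)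
    (hu : u ∈ PointedCone.hull ℝ S) (hu0 : ⟪e, u⟫ = 0) : u = 0 := by
  have hnonneg {v : E} (hv : v ∈ PointedCone.hull ℝ S) : 0 ≤ ⟪e, v⟫ :=
    inner_nonneg_of_mem_hull (fun s hs => (he s hs).le) hv
  induction hu using Submodule.span_induction with
  | mem s hs => exact absurd hu0 (he s hs).ne'
  | zero => rfl
  | add u v hu' hv' hu hv =>
    rw [inner_add_right] at hu0
    have := hnonneg hu'
    have := hnonneg hv'
    rw [hu (by linarith), hv (by linarith), add_zero]
  | smul c u _ hu =>
    rw [← Nonneg.coe_smul, real_inner_smul_right, mul_eq_zero] at hu0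
    rcases hu0 with hc | hu0
    · rw [← Nonneg.coe_smul, hc, zero_smul]
    · rw [hu hu0, smul_zero]

lemma exists_inner_pos_of_mem_hull {S : Set E} {u : E} (hu : u ∈ PointedCone.hull ℝ S)
    (hu0 : u ≠ 0) : ∃ s ∈ S, 0 < ⟪s, u⟫ := by
  by_contra! h
  have := inner_nonneg_of_mem_hull (e := -u) (fun s hs => by
    rw [inner_neg_left, real_inner_comm]; linarith [h s hs]) hu
  rw [inner_neg_left, neg_nonneg] at this
  exact hu0 (real_inner_self_nonpos.1 this)

lemma exists_forall_inner_ne_zero (S : Finset E) (hS : (0 : E) ∉ S) :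
    ∃ g : E, ∀ α ∈ S, ⟪g, α⟫ ≠ 0 := by
  obtain ⟨g, hg⟩ := Module.Dual.exists_forall_ne_zero_of_forall_exists
    (fun α : S => innerₛₗ ℝ (α : E))
    (fun α => ⟨α, by simpa using fun h : (α : E) = 0 => hS (h ▸ α.2)⟩)
  exact ⟨g, fun α hα => by simpa [real_inner_comm] using hg ⟨α, hα⟩⟩

lemma norm_sub_le_norm_sub_iff_inner_le {x y z : E} (h : ‖z‖ = ‖y‖) :
    ‖x - y‖ ≤ ‖x - z‖ ↔ ⟪x, z⟫ ≤ ⟪x, y⟫ := by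
  rw [← sq_le_sq₀ (norm_nonneg _) (norm_nonneg _), norm_sub_sq_real, norm_sub_sq_real, h]
  constructor <;> intro <;> linarith

def posRoots (R : Finset E) (e : E) : Finset E :=
  R.filter (0 < ⟪e, ·⟫)

lemma mem_posRoots {R : Finset E} {e β : E} : β ∈ posRoots R e ↔ β ∈ R ∧ 0 < ⟪e, β⟫ :=
  Finset.mem_filter

def closedChamber (R : Finset E) (e : E) : Set E :=
  {v | ∀ β ∈ posRoots R e, 0 ≤ ⟪v, β⟫}

lemma exists_regular_mem_closedChamber (R : Finset E) (hR : (0 : E) ∉ R) {x y : E}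
    (hxy : ∀ α ∈ R, 0 ≤ ⟪x, α⟫ * ⟪y, α⟫) :
    ∃ e : E, (∀ α ∈ R, ⟪e, α⟫ ≠ 0) ∧ x ∈ closedChamber R e ∧ y ∈ closedChamber R e := by
  obtain ⟨g, hg⟩ := exists_forall_inner_ne_zero R hR
  -- for small `t > 0`, `x + y + t • g` is regular and is negative wherever `x + y` is
  have hsign : ∀ α ∈ R, ∀ᶠ t in 𝓝[>] (0 : ℝ),
      ⟪x + y + t • g, α⟫ ≠ 0 ∧ (⟪x + y, α⟫ < 0 → ⟪x + y + t • g, α⟫ < 0) := by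
    intro α hα
    have hlin (t : ℝ) : ⟪x + y + t • g, α⟫ = ⟪x + y, α⟫ + t * ⟪g, α⟫ := by
      rw [inner_add_left, real_inner_smul_left]
    have hlim : Tendsto (fun t : ℝ => ⟪x + y + t • g, α⟫) (𝓝[>] 0) (𝓝 ⟪x + y, α⟫) := by
      simp_rw [hlin]
      exact ((continuous_const.add (continuous_id.mul continuous_const)).tendsto' 0 _
        (by simp)).mono_left nhdsWithin_le_nhds
    rcases lt_trichotomy ⟪x + y, α⟫ 0 with hneg | hzero | hpos
    · filter_upwards [hlim.eventually_lt_const hneg] with t ht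
      exact ⟨ht.ne, fun _ => ht⟩
    · filter_upwards [self_mem_nhdsWithin] with t (ht : 0 < t)
      rw [hlin, hzero, zero_add]
      exact ⟨mul_ne_zero ht.ne' (hg α hα), fun h => absurd h (lt_irrefl 0)⟩
    · filter_upwards [hlim.eventually_const_lt hpos] with t ht
      exact ⟨ht.ne', fun h => absurd h hpos.not_gt⟩
  obtain ⟨t, ht⟩ := ((eventually_all_finset R).2 hsign).exists
  refine ⟨x + y + t • g, fun α hα => (ht α hα).1, fun β hβ => ?_, fun β hβ => ?_⟩ <;>
  · obtain ⟨hβR, hβpos⟩ := mem_posRoots.1 hβ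
    have hs : 0 ≤ ⟪x, β⟫ + ⟪y, β⟫ := by
      rw [← inner_add_left]
      exact not_lt.1 fun h => hβpos.not_gt ((ht β hβR).2 h)
    nlinarith [hxy β hβR]

end Cones

section Reflections

variable {N : ℕ}

lemma sigmaRefl_neg (α : Euc N) : sigmaRefl (-α) = sigmaRefl α := by
  unfold sigmaRefl
  congr 2
  rw [← neg_one_smul ℝ α]
  exact Submodule.span_singleton_smul_eq isUnit_one.neg α

lemma sigmaRefl_inv (α : Euc N) : (sigmaRefl α)⁻¹ = sigmaRefl α :=
  Submodule.reflection_inv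

lemma sigmaRefl_mul_self (α : Euc N) : sigmaRefl α * sigmaRefl α = 1 :=
  Submodule.reflection_mul_reflection _

lemma sigmaRefl_sigmaRefl (α v : Euc N) : sigmaRefl α (sigmaRefl α v) = v :=
  Submodule.reflection_reflection _ v

lemma sigmaRefl_self (α : Euc N) : sigmaRefl α α = -α :=
  Submodule.reflection_orthogonalComplement_singleton_eq_neg α

lemma sigmaRefl_map (w : Euc N ≃ₗᵢ[ℝ] Euc N) (α : Euc N) :
    sigmaRefl (w α) = w * sigmaRefl α * w⁻¹ := by
  have hK : (ℝ ∙ w α)ᗮ = (ℝ ∙ α)ᗮ.map (w.toLinearEquiv : Euc N →ₗ[ℝ] Euc N) := by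
    rw [Submodule.map_orthogonal_equiv, Submodule.map_span, Set.image_singleton]
    rfl
  calc sigmaRefl (w α)
      = ((ℝ ∙ α)ᗮ.map (w.toLinearEquiv : Euc N →ₗ[ℝ] Euc N)).reflection := by
        unfold sigmaRefl
        congr 1
    _ = w * sigmaRefl α * w⁻¹ := Submodule.reflection_map w _

lemma sigmaRefl_apply_of_inner_self {α : Euc N} (hα : ⟪α, α⟫ = 2) (v : Euc N) :
    sigmaRefl α v = v - ⟪α, v⟫ • α := by
  rw [sigmaRefl, Submodule.reflection_orthogonal_apply, Submodule.reflection_singleton_apply]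
  simp only [RCLike.ofReal_real_eq_id, id_eq]
  rw [← real_inner_self_eq_norm_sq, hα]
  module

lemma sigmaRefl_mem_coxeterGroup {R : Finset (Euc N)} {α : Euc N} (hα : α ∈ R) :
    sigmaRefl α ∈ coxeterGroup R :=
  Subgroup.subset_closure ⟨α, hα, rfl⟩

lemma mem_coxeterGroup_iff {S : Finset (Euc N)} {w : Euc N ≃ₗᵢ[ℝ] Euc N} :
    w ∈ coxeterGroup S ↔ ∃ l : List (Euc N), (∀ γ ∈ l, γ ∈ S) ∧ (l.map sigmaRefl).prod = w := by
  refine ⟨fun hw => ?_, fun ⟨l, hl, hw⟩ => hw ▸ Subgroup.list_prod_mem _ ?_⟩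
  · induction hw using Subgroup.closure_induction with
    | mem _ h =>
      obtain ⟨γ, hγ, rfl⟩ := h
      exact ⟨[γ], by simpa using hγ, by simp⟩
    | one => exact ⟨[], by simp, rfl⟩
    | mul _ _ _ _ h₁ h₂ =>
      obtain ⟨l₁, hl₁, rfl⟩ := h₁
      obtain ⟨l₂, hl₂, rfl⟩ := h₂
      exact ⟨l₁ ++ l₂, fun γ hγ => (List.mem_append.1 hγ).elim (hl₁ γ) (hl₂ γ), by simp⟩
    | inv _ _ h =>
      obtain ⟨l, hl, rfl⟩ := h
      refine ⟨l.reverse, by simpa using hl, ?_⟩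
      rw [List.prod_inv_reverse, List.map_reverse, List.map_map]
      simp [Function.comp_def, sigmaRefl_inv]
  · simpa using fun γ hγ => sigmaRefl_mem_coxeterGroup (hl γ hγ)

end Reflections

section SimpleSystem

variable {E : Type*} [NormedAddCommGroup E] [InnerProductSpace ℝ E]

structure IsSimpleSystem (R : Finset E) (e : E) (Δ : Finset E) : Prop where
  subset_posRoots : Δ ⊆ posRoots R e
  mem_hull : ∀ β ∈ posRoots R e, β ∈ PointedCone.hull ℝ (Δ : Set E)
  notMem_hull_sdiff : ∀ α ∈ Δ, α ∉ PointedCone.hull ℝ ((Δ : Set E) \ {α})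

lemma exists_isSimpleSystem (R : Finset E) (e : E) : ∃ Δ, IsSimpleSystem R e Δ := by
  classical
  -- a generating subset of least cardinality has no redundant element
  obtain ⟨Δ, hΔ, hmin⟩ := ((posRoots R e).powerset.filter
      (fun T : Finset E => ∀ β ∈ posRoots R e, β ∈ PointedCone.hull ℝ (T : Set E))).exists_min_image
    Finset.card ⟨posRoots R e, Finset.mem_filter.2 ⟨Finset.mem_powerset_self _,
      fun β hβ => PointedCone.subset_hull (Finset.mem_coe.2 hβ)⟩⟩
  rw [Finset.mem_filter, Finset.mem_powerset] at hΔ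
  refine ⟨Δ, hΔ.1, hΔ.2, fun α hα hmem => ?_⟩
  have hle : PointedCone.hull ℝ (Δ : Set E) ≤ PointedCone.hull ℝ (Δ.erase α : Set E) := by
    refine Submodule.span_le.2 fun γ hγ => ?_
    rw [Finset.coe_erase]
    by_cases hγα : γ = α
    · exact hγα ▸ hmem
    · exact PointedCone.subset_hull ⟨hγ, hγα⟩
  have := hmin (Δ.erase α) (Finset.mem_filter.2
    ⟨Finset.mem_powerset.2 ((Finset.erase_subset α Δ).trans hΔ.1), fun β hβ => hle (hΔ.2 β hβ)⟩)
  exact (Finset.card_erase_lt_of_mem hα).not_ge this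

end SimpleSystem

namespace IsNormalizedRootSystem

variable {N : ℕ} {R : Finset (Euc N)}

lemma inner_self (hR : IsNormalizedRootSystem R) {α : Euc N} (hα : α ∈ R) : ⟪α, α⟫ = 2 := by
  rw [real_inner_self_eq_norm_sq, hR.norm_eq α hα, Real.sq_sqrt zero_le_two]

lemma sigmaRefl_apply (hR : IsNormalizedRootSystem R) {α : Euc N} (hα : α ∈ R) (v : Euc N) :
    sigmaRefl α v = v - ⟪α, v⟫ • α :=
  sigmaRefl_apply_of_inner_self (hR.inner_self hα) v

lemma inner_sigmaRefl (hR : IsNormalizedRootSystem R) {α : Euc N} (hα : α ∈ R) (u v : Euc N) :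
    ⟪u, sigmaRefl α v⟫ = ⟪u, v⟫ - ⟪α, v⟫ * ⟪u, α⟫ := by
  rw [hR.sigmaRefl_apply hα, inner_sub_right, real_inner_smul_right]

lemma norm_sub_le_norm_sub_sigmaRefl_iff (hR : IsNormalizedRootSystem R) {α : Euc N} (hα : α ∈ R)
    (x y : Euc N) :
    ‖x - y‖ ≤ ‖x - sigmaRefl α y‖ ↔ 0 ≤ ⟪x, α⟫ * ⟪y, α⟫ := by
  rw [norm_sub_le_norm_sub_iff_inner_le ((sigmaRefl α).norm_map y), hR.inner_sigmaRefl hα,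
    real_inner_comm α y]
  constructor <;> intro h <;> linarith

lemma apply_mem (hR : IsNormalizedRootSystem R) {w : Euc N ≃ₗᵢ[ℝ] Euc N}
    (hw : w ∈ coxeterGroup R) {α : Euc N} (hα : α ∈ R) : w α ∈ R := by
  induction hw using Subgroup.closure_induction'' generalizing α with
  | mem _ h =>
    obtain ⟨β, hβ, rfl⟩ := h
    exact hR.refl_mem β hβ α hα
  | inv_mem _ h =>
    obtain ⟨β, hβ, rfl⟩ := h
    rw [sigmaRefl_inv]
    exact hR.refl_mem β hβ α hα
  | one => exact hα
  | mul _ _ _ _ h₁ h₂ => exact h₁ (h₂ hα)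

lemma mem_posRoots_or_neg_mem (hR : IsNormalizedRootSystem R) {e : Euc N}
    (he : ∀ α ∈ R, ⟪e, α⟫ ≠ 0) {β : Euc N} (hβ : β ∈ R) :
    β ∈ posRoots R e ∨ -β ∈ posRoots R e := by
  rcases (he β hβ).lt_or_gt with h | h
  · exact .inr (mem_posRoots.2 ⟨hR.neg_mem β hβ, by rw [inner_neg_right]; linarith⟩)
  · exact .inl (mem_posRoots.2 ⟨hβ, h⟩)

end IsNormalizedRootSystem

namespace IsSimpleSystem

variable {N : ℕ} {R : Finset (Euc N)} {e : Euc N} {Δ : Finset (Euc N)}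

lemma sigmaRefl_mem_posRoots (hR : IsNormalizedRootSystem R) (he : ∀ α ∈ R, ⟪e, α⟫ ≠ 0)
    (hΔ : IsSimpleSystem R e Δ) {α β : Euc N} (hα : α ∈ Δ) (hβ : β ∈ posRoots R e)
    (hne : β ≠ α) : sigmaRefl α β ∈ posRoots R e := by
  obtain ⟨hαR, hαe⟩ := mem_posRoots.1 (hΔ.subset_posRoots hα)
  obtain ⟨hβR, hβe⟩ := mem_posRoots.1 hβ
  have hΔα : (Δ : Set (Euc N)) = insert α ((Δ : Set (Euc N)) \ {α}) :=
    (Set.insert_sdiff_self_of_mem (Finset.mem_coe.2 hα)).symm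
  by_contra hσβ
  -- write `β` and `-σ_α β` as multiples of `α` plus elements of the cone on `Δ \ {α}`:
  -- either `α` is redundant in `Δ`, or `β` is a multiple of `α`
  have hγ : ⟪α, β⟫ • α - β ∈ posRoots R e := by
    rcases hR.mem_posRoots_or_neg_mem he (hR.refl_mem α hαR β hβR) with h | h
    · exact absurd h hσβ
    · rwa [hR.sigmaRefl_apply hαR, neg_sub] at h
  obtain ⟨c, u, hu, hβu⟩ := Submodule.mem_span_insert.1 (hΔα ▸ hΔ.mem_hull β hβ)
  obtain ⟨d, v, hv, hγv⟩ := Submodule.mem_span_insert.1 (hΔα ▸ hΔ.mem_hull _ hγ)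
  rw [← Nonneg.coe_smul] at hβu hγv
  have hsum : (⟪α, β⟫ - c - d) • α = u + v := by
    linear_combination (norm := module) hγv + hβu
  have hpos : ∀ γ ∈ (Δ : Set (Euc N)) \ {α}, 0 < ⟪e, γ⟫ :=
    fun γ hγ => (mem_posRoots.1 (hΔ.subset_posRoots hγ.1)).2
  rcases lt_or_ge 0 (⟪α, β⟫ - c - d) with ht | ht
  · refine hΔ.notMem_hull_sdiff α hα ((PointedCone.smul_mem_iff _ ht).1 ?_)
    exact hsum ▸ add_mem hu hv
  · have hue : ⟪e, u⟫ = 0 := by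
      have := congrArg (⟪e, ·⟫) hsum
      simp only [real_inner_smul_right, inner_add_right] at this
      have := inner_nonneg_of_mem_hull (fun γ hγ => (hpos γ hγ).le) hu
      have := inner_nonneg_of_mem_hull (fun γ hγ => (hpos γ hγ).le) hv
      nlinarith
    rw [eq_zero_of_mem_hull_of_inner_eq_zero hpos hu hue, add_zero] at hβu
    rcases hR.smul_mem α hαR c (hβu ▸ hβR) with h | h
    · exact hne (hβu.trans h)
    · rw [hβu, h, inner_neg_right] at hβe
      linarith

lemma sigmaRefl_mem_coxeterGroup (hR : IsNormalizedRootSystem R) (he : ∀ α ∈ R, ⟪e, α⟫ ≠ 0)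
    (hΔ : IsSimpleSystem R e Δ) {β : Euc N} (hβ : β ∈ posRoots R e) :
    sigmaRefl β ∈ coxeterGroup Δ := by
  classical
  by_contra hβΔ
  -- a counterexample of least height `⟪e, ·⟫` is reflected by a simple root to a lower one
  obtain ⟨β, hβ, hmin⟩ := ((posRoots R e).filter (sigmaRefl · ∉ coxeterGroup Δ)).exists_min_image
    (⟪e, ·⟫) ⟨β, Finset.mem_filter.2 ⟨hβ, hβΔ⟩⟩
  obtain ⟨hβ, hβΔ⟩ := Finset.mem_filter.1 hβ
  obtain ⟨γ, hγ, hγβ⟩ := exists_inner_pos_of_mem_hull (hΔ.mem_hull β hβ)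
    (fun h => hR.ne_zero (h ▸ (mem_posRoots.1 hβ).1))
  have hγΔ : sigmaRefl γ ∈ coxeterGroup Δ := _root_.sigmaRefl_mem_coxeterGroup hγ
  by_cases hβγ : β = γ
  · exact hβΔ (hβγ ▸ hγΔ)
  obtain ⟨hγR, hγe⟩ := mem_posRoots.1 (hΔ.subset_posRoots hγ)
  have hlower : ⟪e, sigmaRefl γ β⟫ < ⟪e, β⟫ := by
    rw [hR.inner_sigmaRefl hγR]
    nlinarith
  have hmem : sigmaRefl (sigmaRefl γ β) ∈ coxeterGroup Δ := by
    by_contra h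
    exact (hmin _ (Finset.mem_filter.2 ⟨hΔ.sigmaRefl_mem_posRoots hR he hγ hβ hβγ, h⟩)).not_gt
      hlower
  apply hβΔ
  rw [← sigmaRefl_sigmaRefl γ β, sigmaRefl_map]
  exact mul_mem (mul_mem hγΔ hmem) (inv_mem hγΔ)

lemma coxeterGroup_eq (hR : IsNormalizedRootSystem R) (he : ∀ α ∈ R, ⟪e, α⟫ ≠ 0)
    (hΔ : IsSimpleSystem R e Δ) : coxeterGroup Δ = coxeterGroup R := by
  refine le_antisymm (Subgroup.closure_mono (Set.image_mono fun α hα =>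
    (mem_posRoots.1 (hΔ.subset_posRoots hα)).1)) ((Subgroup.closure_le _).2 ?_)
  rintro _ ⟨β, hβ, rfl⟩
  rcases hR.mem_posRoots_or_neg_mem he hβ with h | h
  · exact hΔ.sigmaRefl_mem_coxeterGroup hR he h
  · show sigmaRefl β ∈ _
    rw [← sigmaRefl_neg]
    exact hΔ.sigmaRefl_mem_coxeterGroup hR he h

/-- The exchange condition. -/
lemma exists_list_prod_mul_sigmaRefl_eq (hR : IsNormalizedRootSystem R)
    (he : ∀ α ∈ R, ⟪e, α⟫ ≠ 0) (hΔ : IsSimpleSystem R e Δ) {l : List (Euc N)}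
    (hl : ∀ γ ∈ l, γ ∈ Δ) {a : Euc N} (ha : a ∈ Δ) (hneg : ⟪e, (l.map sigmaRefl).prod a⟫ < 0) :
    ∃ l' : List (Euc N), (∀ γ ∈ l', γ ∈ Δ) ∧ l'.length + 1 = l.length ∧
      (l.map sigmaRefl).prod * sigmaRefl a = (l'.map sigmaRefl).prod := by
  induction l with
  | nil => exact absurd hneg (mem_posRoots.1 (hΔ.subset_posRoots ha)).2.not_gt
  | cons γ l ih =>
    simp only [List.mem_cons, forall_eq_or_imp] at hl
    simp only [List.map_cons, List.prod_cons, LinearIsometryEquiv.coe_mul,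
      Function.comp_apply] at hneg ⊢
    set w := (l.map sigmaRefl).prod
    have hwa : w a ∈ R := hR.apply_mem
      (hΔ.coxeterGroup_eq hR he ▸ mem_coxeterGroup_iff.2 ⟨l, hl.2, rfl⟩)
      (mem_posRoots.1 (hΔ.subset_posRoots ha)).1
    rcases (he _ hwa).lt_or_gt with hwneg | hwpos
    · obtain ⟨l', hl', hlen, hprod⟩ := ih hl.2 hwneg
      refine ⟨γ :: l', by simpa using ⟨hl.1, hl'⟩, by simp [hlen], ?_⟩
      rw [mul_assoc, hprod, List.map_cons, List.prod_cons]
    · -- `σ_γ` sends the positive root `w a` to a negative one, so `w a = γ`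
      have hwaγ : w a = γ := by
        by_contra hne
        exact (mem_posRoots.1 (hΔ.sigmaRefl_mem_posRoots hR he hl.1
          (mem_posRoots.2 ⟨hwa, hwpos⟩) hne)).2.not_gt hneg
      refine ⟨l, hl.2, rfl, ?_⟩
      rw [← hwaγ, sigmaRefl_map, mul_assoc, mul_assoc, inv_mul_cancel_left,
        mul_assoc, sigmaRefl_mul_self, mul_one]

lemma list_prod_apply_eq_self (hR : IsNormalizedRootSystem R) (he : ∀ α ∈ R, ⟪e, α⟫ ≠ 0)
    (hΔ : IsSimpleSystem R e Δ) {l : List (Euc N)} (hl : ∀ γ ∈ l, γ ∈ Δ) {y : Euc N}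
    (hy : y ∈ closedChamber R e) (hly : (l.map sigmaRefl).prod y ∈ closedChamber R e) :
    (l.map sigmaRefl).prod y = y := by
  induction hn : l.length using Nat.strong_induction_on generalizing l with
  | _ n ih =>
  rcases l.eq_nil_or_concat' with rfl | ⟨l, a, rfl⟩
  · rfl
  simp only [List.mem_append, List.mem_singleton, or_imp, forall_and, forall_eq] at hl
  simp only [List.length_append, List.length_singleton] at hn
  simp only [List.map_append, List.map_singleton, List.prod_append, List.prod_singleton,
    LinearIsometryEquiv.coe_mul, Function.comp_apply] at hly ⊢
  set w := (l.map sigmaRefl).prod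
  obtain ⟨haR, hae⟩ := mem_posRoots.1 (hΔ.subset_posRoots hl.2)
  have hwa : w a ∈ R := hR.apply_mem
    (hΔ.coxeterGroup_eq hR he ▸ mem_coxeterGroup_iff.2 ⟨l, hl.1, rfl⟩) haR
  rcases (he _ hwa).lt_or_gt with hneg | hpos
  · obtain ⟨l', hl', hlen, hprod⟩ := hΔ.exists_list_prod_mul_sigmaRefl_eq hR he hl.1 hl.2 hneg
    have hw : w (sigmaRefl a y) = (l'.map sigmaRefl).prod y := by rw [← hprod]; rfl
    rw [hw] at hly ⊢
    exact ih l'.length (by omega) hl' hly rfl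
  · -- the word sends `a` to the negative root `-w a`, so `⟪y, a⟫ = -⟪w σ_a y, w a⟫ ≤ 0`
    have hya : ⟪y, a⟫ = 0 := by
      have h := hly _ (mem_posRoots.2 ⟨hwa, hpos⟩)
      rw [show w a = -w (sigmaRefl a a) by rw [sigmaRefl_self, map_neg, neg_neg], inner_neg_right,
        LinearIsometryEquiv.inner_map_map, LinearIsometryEquiv.inner_map_map] at h
      linarith [hy a (hΔ.subset_posRoots hl.2)]
    have hfix : sigmaRefl a y = y := by
      rw [hR.sigmaRefl_apply haR, real_inner_comm, hya, zero_smul, sub_zero]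
    rw [hfix] at hly ⊢
    exact ih l.length (by omega) hl.1 hly rfl

end IsSimpleSystem

section FundamentalDomain

variable {N : ℕ} {R : Finset (Euc N)} {e : Euc N}

theorem eq_of_mem_closedChamber (hR : IsNormalizedRootSystem R) (he : ∀ α ∈ R, ⟪e, α⟫ ≠ 0)
    {w : Euc N ≃ₗᵢ[ℝ] Euc N} (hw : w ∈ coxeterGroup R) {y : Euc N}
    (hy : y ∈ closedChamber R e) (hwy : w y ∈ closedChamber R e) : w y = y := by
  obtain ⟨Δ, hΔ⟩ := exists_isSimpleSystem R e
  obtain ⟨l, hl, rfl⟩ := mem_coxeterGroup_iff.1 (hΔ.coxeterGroup_eq hR he ▸ hw)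
  exact hΔ.list_prod_apply_eq_self hR he hl hy hwy

theorem inner_apply_le_of_mem_closedChamber [Finite (coxeterGroup R)]
    (hR : IsNormalizedRootSystem R) (he : ∀ α ∈ R, ⟪e, α⟫ ≠ 0) {x y : Euc N}
    (hx : x ∈ closedChamber R e) (hy : y ∈ closedChamber R e) (w : coxeterGroup R) :
    ⟪x, (w : Euc N ≃ₗᵢ[ℝ] Euc N) y⟫ ≤ ⟪x, y⟫ := by
  -- among the orbit points at least as close to `x` as `w y`, one of greatest height `⟪e, ·⟫`
  -- lies in the closed chamber, because a reflection would raise any other one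
  set f : coxeterGroup R → Euc N := fun v => (v : Euc N ≃ₗᵢ[ℝ] Euc N) y
  obtain ⟨_, ⟨⟨v, rfl⟩, hv⟩, hmax⟩ := Set.exists_max_image
    {z | z ∈ Set.range f ∧ ⟪x, f w⟫ ≤ ⟪x, z⟫} (⟪e, ·⟫)
    ((Set.finite_range f).subset fun _ h => h.1) ⟨f w, ⟨w, rfl⟩, le_rfl⟩
  have hvy : f v ∈ closedChamber R e := by
    intro β hβ
    obtain ⟨hβR, hβe⟩ := mem_posRoots.1 hβ
    by_contra! hneg
    have := hmax (sigmaRefl β (f v))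
      ⟨⟨⟨sigmaRefl β, sigmaRefl_mem_coxeterGroup hβR⟩ * v, rfl⟩, by
        rw [hR.inner_sigmaRefl hβR, real_inner_comm (f v) β]
        nlinarith [hx β hβ]⟩
    rw [hR.inner_sigmaRefl hβR, real_inner_comm (f v) β] at this
    nlinarith
  calc ⟪x, f w⟫ ≤ ⟪x, f v⟫ := hv
    _ = ⟪x, y⟫ := by rw [show f v = y from eq_of_mem_closedChamber hR he v.2 hy hvy]

end FundamentalDomain

/-- if `‖x - y‖ ≤ ‖x - σ_α y‖` for every root, then `d(x,y) = ‖x - y‖`. -/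
theorem orbDist_eq_of_min_over_reflections {N : ℕ} (R : Finset (Euc N))
    (hR : IsNormalizedRootSystem R) (hG : Finite (coxeterGroup R)) (x y : Euc N)
    (h : ∀ α ∈ R, ‖x - y‖ ≤ ‖x - sigmaRefl α y‖) :
    orbDist (coxeterGroup R) x y = ‖x - y‖ := by
  obtain ⟨e, he, hx, hy⟩ := exists_regular_mem_closedChamber R hR.ne_zero
    fun α hα => (hR.norm_sub_le_norm_sub_sigmaRefl_iff hα x y).1 (h α hα)
  refine le_antisymm (ciInf_le ⟨0, ?_⟩ (1 : coxeterGroup R)) (le_ciInf fun w => ?_)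
  · rintro _ ⟨w, rfl⟩
    exact norm_nonneg _
  · exact (norm_sub_le_norm_sub_iff_inner_le ((w : Euc N ≃ₗᵢ[ℝ] Euc N).norm_map y)).2
      (inner_apply_le_of_mem_closedChamber hR he hx hy w)
end
end

section
/- Let μ be a probability measure on ℝ^N supported in the convex hull of the orbit 𝒪(x) = {σ(x) : σ ∈ G} of x under a finite group G of orthogonal transformations. Define A(x,y,η) = √(‖x‖² + ‖y‖² − 2⟨y,η⟩) and d(x,y) = min_{σ∈G}‖x − σ(y)‖. Then for every η ∈ conv 𝒪(x), d(x,y) ≤ A(x,y,η). (In particular ‖x‖² + ‖y‖² − 2⟨y,η⟩ ≥ d(x,y)² ≥ 0.) -/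
open scoped RealInnerProductSpace
noncomputable section

/-!
For `σ ∈ G` the quantity `‖x‖² + ‖y‖² − 2⟪y, σ x⟫` equals `‖x − σ⁻¹ y‖² ≥ d(x,y)²`. As a function
of `η` the expression `‖x‖² + ‖y‖² − 2⟪y, η⟫` is affine, so on the convex hull of the orbit it is
bounded below by its value at some orbit point, which gives `d(x,y)² ≤ A(x,y,η)²`.
-/

section InnerProductSpace

variable {E : Type*} [NormedAddCommGroup E] [InnerProductSpace ℝ E]

theorem LinearIsometryEquiv.norm_sub_symm_apply_sq (σ : E ≃ₗᵢ[ℝ] E) (x y : E) :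
    ‖x - σ.symm y‖ ^ 2 = ‖x‖ ^ 2 + ‖y‖ ^ 2 - 2 * ⟪y, σ x⟫ := by
  have h : ‖x - σ.symm y‖ = ‖σ x - y‖ := by
    rw [← σ.norm_map, map_sub, σ.apply_symm_apply]
  rw [h, norm_sub_sq_real, σ.norm_map, real_inner_comm]
  ring

theorem exists_inner_le_of_mem_convexHull {s : Set E} {η : E} (hη : η ∈ convexHull ℝ s) (y : E) :
    ∃ z ∈ s, ⟪y, η⟫ ≤ ⟪y, z⟫ :=
  ((innerₛₗ ℝ y).convexOn convex_univ).exists_ge_of_mem_convexHull (Set.subset_univ s) hη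

end InnerProductSpace

section OrbDist

variable {N : ℕ} (G : Subgroup (Euc N ≃ₗᵢ[ℝ] Euc N)) (x y : Euc N)

theorem orbDist_nonneg : 0 ≤ orbDist G x y :=
  Real.iInf_nonneg fun _ => norm_nonneg _

variable {G}

theorem orbDist_le_norm_sub {σ : Euc N ≃ₗᵢ[ℝ] Euc N} (hσ : σ ∈ G) :
    orbDist G x y ≤ ‖x - σ y‖ :=
  ciInf_le ⟨0, by rintro _ ⟨τ, rfl⟩; exact norm_nonneg _⟩ (⟨σ, hσ⟩ : G)

theorem orbDist_sq_le_of_mem {σ : Euc N ≃ₗᵢ[ℝ] Euc N} (hσ : σ ∈ G) :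
    orbDist G x y ^ 2 ≤ ‖x‖ ^ 2 + ‖y‖ ^ 2 - 2 * ⟪y, σ x⟫ := by
  rw [← σ.norm_sub_symm_apply_sq]
  exact pow_le_pow_left₀ (orbDist_nonneg G x y) (orbDist_le_norm_sub x y (inv_mem hσ)) 2

theorem orbDist_sq_le_of_mem_convexHull {η : Euc N}
    (hη : η ∈ convexHull ℝ {z : Euc N | ∃ σ ∈ G, z = σ x}) :
    orbDist G x y ^ 2 ≤ ‖x‖ ^ 2 + ‖y‖ ^ 2 - 2 * ⟪y, η⟫ := by
  obtain ⟨_, ⟨σ, hσ, rfl⟩, hle⟩ := exists_inner_le_of_mem_convexHull hη y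
  linarith [orbDist_sq_le_of_mem x y hσ]

end OrbDist

open MeasureTheory in
theorem orbDist_le_A_general {N : ℕ} (G : Subgroup (Euc N ≃ₗᵢ[ℝ] Euc N))
    (x y : Euc N) :
    ∀ η ∈ convexHull ℝ {z : Euc N | ∃ σ ∈ G, z = σ x},
      orbDist G x y ≤ Real.sqrt (‖x‖ ^ 2 + ‖y‖ ^ 2 - 2 * ⟪y, η⟫) ∧
      orbDist G x y ^ 2 ≤ ‖x‖ ^ 2 + ‖y‖ ^ 2 - 2 * ⟪y, η⟫ ∧
      (0:ℝ) ≤ ‖x‖ ^ 2 + ‖y‖ ^ 2 - 2 * ⟪y, η⟫ := by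
  intro η hη
  have hsq := orbDist_sq_le_of_mem_convexHull x y hη
  exact ⟨Real.le_sqrt_of_sq_le hsq, hsq, (sq_nonneg _).trans hsq⟩

open MeasureTheory in
/-- `d(x,y) ≤ A(x,y,η)` for `η` in the convex hull of the orbit of `x`. -/
theorem orbDist_le_A {N : ℕ} (G : Subgroup (Euc N ≃ₗᵢ[ℝ] Euc N)) (hG : Finite G)
    (x y : Euc N) (μ : Measure (Euc N)) (hμ : IsProbabilityMeasure μ)
    (hsupp : μ (convexHull ℝ {z : Euc N | ∃ σ ∈ G, z = σ x})ᶜ = 0) :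
    ∀ η ∈ convexHull ℝ {z : Euc N | ∃ σ ∈ G, z = σ x},
      orbDist G x y ≤ Real.sqrt (‖x‖ ^ 2 + ‖y‖ ^ 2 - 2 * ⟪y, η⟫) ∧
      orbDist G x y ^ 2 ≤ ‖x‖ ^ 2 + ‖y‖ ^ 2 - 2 * ⟪y, η⟫ ∧
      (0:ℝ) ≤ ‖x‖ ^ 2 + ‖y‖ ^ 2 - 2 * ⟪y, η⟫ :=
  orbDist_le_A_general G x y
end
end

section
/- Suppose a positive kernel h_t(x,y) satisfies, for constants c_l > 0, C_l > 0, the lower bound h_t(x,y) ≥ C_l w(B(x,√t))^{−1} e^{−c_l ‖x−y‖²/t}, and for some C₁ ≥ 1 the inequality h_t(x,y) ≥ C₁^{−1}(1 + ‖x−y‖/√t)^{−2} h_t(x, σ_α(y)) for every root α ∈ R. Then, by induction on the length of an admissible sequence 𝛂 = (α₁,…,α_m) ∈ 𝒜(x,y), one has h_t(x,y) ≥ C₁^{−m} ρ_𝛂(x,y,t) h_t(x, σ_𝛂(y)) ≥ C₁^{−m} C_l w(B(x,√t))^{−1} e^{−c_l d(x,y)²/t} ρ_𝛂(x,y,t),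 where σ_𝛂 = σ_{α_m}∘⋯∘σ_{α₁} and ρ_𝛂 is defined as the product ∏_{j=0}^{m−1}(1 + ‖x − σ_{α_j}∘⋯∘σ_{α₁}(y)‖/√t)^{−2}. -/
open scoped RealInnerProductSpace
noncomputable section

/-- The weight function of the measure `dw`. -/
def weight {N : ℕ} (R : Finset (Euc N)) (k : Euc N → ℝ) (x : Euc N) : ℝ :=
  ∏ α ∈ R, |⟪x, α⟫| ^ (k α)

/-- The weighted volume of the closed Euclidean ball. -/
def wBall {N : ℕ} (R : Finset (Euc N)) (k : Euc N → ℝ) (x : Euc N) (r : ℝ) : ℝ :=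
  ∫ y in Metric.closedBall x r, weight R k y

/-- Successive application of the reflections determined by a list of roots
(the head of the list acts first). -/
def applyList {N : ℕ} (l : List (Euc N)) (y : Euc N) : Euc N :=
  l.foldl (fun z α => sigmaRefl α z) y

/-- The product `ρ_𝛂(x,y,t)` over the partial compositions of the reflections of `l`. -/
def rhoSeq {N : ℕ} (l : List (Euc N)) (x y : Euc N) (t : ℝ) : ℝ :=
  ∏ j ∈ Finset.range l.length,
    ((1 + ‖x - applyList (l.take j) y‖ / Real.sqrt t) ^ 2)⁻¹


/-!
Peeling off the first reflection `α₁`, the one-step comparison at `y` followed by the induction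
hypothesis at `σ_{α₁}(y)` gives the first bound. Since `σ_𝛂 ∈ G`, the orbit distance satisfies
`d(x, y) = d(x, σ_𝛂(y)) = ‖x − σ_𝛂(y)‖` for admissible `𝛂`, so the Gaussian lower bound at
`σ_𝛂(y)` turns the first bound into the second.
-/

namespace IteratedLowerBound

variable {N : ℕ}

lemma applyList_cons (α : Euc N) (l : List (Euc N)) (y : Euc N) :
    applyList (α :: l) y = applyList l (sigmaRefl α y) := rfl

lemma applyList_eq_prod (l : List (Euc N)) (y : Euc N) :
    applyList l y = (l.map sigmaRefl).reverse.prod y := by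
  induction l generalizing y with
  | nil => rfl
  | cons α l ih =>
    rw [applyList_cons, ih, List.map_cons, List.reverse_cons, List.prod_append,
      LinearIsometryEquiv.coe_mul]
    simp

lemma prod_sigmaRefl_mem_coxeterGroup (R : Finset (Euc N)) {l : List (Euc N)}
    (hl : ∀ a ∈ l, a ∈ R) : (l.map sigmaRefl).reverse.prod ∈ coxeterGroup R := by
  refine Subgroup.list_prod_mem _ fun g hg => ?_
  obtain ⟨α, hα, rfl⟩ := List.mem_map.1 (List.mem_reverse.1 hg)
  exact Subgroup.subset_closure ⟨α, hl α hα, rfl⟩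

lemma orbDist_apply_of_mem (G : Subgroup (Euc N ≃ₗᵢ[ℝ] Euc N)) (x y : Euc N)
    {g : Euc N ≃ₗᵢ[ℝ] Euc N} (hg : g ∈ G) : orbDist G x (g y) = orbDist G x y :=
  (Equiv.mulRight (⟨g, hg⟩ : G)).iInf_comp (g := fun σ : G => ‖x - (σ : Euc N ≃ₗᵢ[ℝ] Euc N) y‖)

lemma rhoSeq_cons (α : Euc N) (l : List (Euc N)) (x y : Euc N) (t : ℝ) :
    rhoSeq (α :: l) x y t =
      ((1 + ‖x - y‖ / Real.sqrt t) ^ 2)⁻¹ * rhoSeq l x (sigmaRefl α y) t := by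
  rw [rhoSeq, rhoSeq, List.length_cons, Finset.prod_range_succ', mul_comm]
  simp only [List.take_succ_cons, applyList_cons, List.take_zero]
  rfl

lemma rhoSeq_nonneg (l : List (Euc N)) (x y : Euc N) (t : ℝ) : 0 ≤ rhoSeq l x y t :=
  Finset.prod_nonneg fun _ _ => inv_nonneg.2 (sq_nonneg _)

theorem rhoSeq_mul_le_of_forall_reflection {C : ℝ} (hC : 0 ≤ C) (x : Euc N) (t : ℝ)
    (u : Euc N → ℝ) (l : List (Euc N))
    (hrefl : ∀ α ∈ l, ∀ y, C⁻¹ * ((1 + ‖x - y‖ / Real.sqrt t) ^ 2)⁻¹ * u (sigmaRefl α y) ≤ u y)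
    (y : Euc N) : (C ^ l.length)⁻¹ * rhoSeq l x y t * u (applyList l y) ≤ u y := by
  induction l generalizing y with
  | nil => simp [rhoSeq, applyList]
  | cons α l ih =>
    have ih' := ih (fun β hβ => hrefl β (List.mem_cons_of_mem _ hβ)) (sigmaRefl α y)
    calc (C ^ (α :: l).length)⁻¹ * rhoSeq (α :: l) x y t * u (applyList (α :: l) y)
        = C⁻¹ * ((1 + ‖x - y‖ / Real.sqrt t) ^ 2)⁻¹ *
            ((C ^ l.length)⁻¹ * rhoSeq l x (sigmaRefl α y) t *
              u (applyList l (sigmaRefl α y))) := by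
          rw [rhoSeq_cons, applyList_cons, List.length_cons, pow_succ, mul_inv]
          ring
      _ ≤ C⁻¹ * ((1 + ‖x - y‖ / Real.sqrt t) ^ 2)⁻¹ * u (sigmaRefl α y) := by
          gcongr
      _ ≤ u y := hrefl α List.mem_cons_self y

end IteratedLowerBound

open IteratedLowerBound in
theorem iterated_lower_bound_general {N : ℕ} (R : Finset (Euc N))
    (k : Euc N → ℝ)
    (h : ℝ → Euc N → Euc N → ℝ)
    (cl Cl C₁ : ℝ) (hC₁ : 1 ≤ C₁)
    (hlow : ∀ t, 0 < t → ∀ x y : Euc N,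
      Cl * (wBall R k x (Real.sqrt t))⁻¹ * Real.exp (-cl * ‖x - y‖ ^ 2 / t) ≤ h t x y)
    (hrefl : ∀ t, 0 < t → ∀ x y : Euc N, ∀ α ∈ R,
      C₁⁻¹ * ((1 + ‖x - y‖ / Real.sqrt t) ^ 2)⁻¹ * h t x (sigmaRefl α y) ≤ h t x y) :
    ∀ t, 0 < t → ∀ x y : Euc N, ∀ l : List (Euc N), (∀ a ∈ l, a ∈ R) →
      orbDist (coxeterGroup R) x (applyList l y) = ‖x - applyList l y‖ →
      (C₁ ^ l.length)⁻¹ * rhoSeq l x y t * h t x (applyList l y) ≤ h t x y ∧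
      (C₁ ^ l.length)⁻¹ * Cl * (wBall R k x (Real.sqrt t))⁻¹ *
        Real.exp (-cl * (orbDist (coxeterGroup R) x y) ^ 2 / t) * rhoSeq l x y t
        ≤ h t x y := by
  intro t ht x y l hl hadm
  have hC₁0 : 0 ≤ C₁ := zero_le_one.trans hC₁
  have hiter := rhoSeq_mul_le_of_forall_reflection hC₁0 x t (h t x) l
    (fun α hα y => hrefl t ht x y α (hl α hα)) y
  have hdist : orbDist (coxeterGroup R) x y = ‖x - applyList l y‖ := by
    rw [← hadm, applyList_eq_prod,
      orbDist_apply_of_mem _ _ _ (prod_sigmaRefl_mem_coxeterGroup R hl)]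
  refine ⟨hiter, ?_⟩
  have hρ := rhoSeq_nonneg l x y t
  calc (C₁ ^ l.length)⁻¹ * Cl * (wBall R k x (Real.sqrt t))⁻¹ *
        Real.exp (-cl * (orbDist (coxeterGroup R) x y) ^ 2 / t) * rhoSeq l x y t
      = (C₁ ^ l.length)⁻¹ * rhoSeq l x y t *
        (Cl * (wBall R k x (Real.sqrt t))⁻¹ *
          Real.exp (-cl * ‖x - applyList l y‖ ^ 2 / t)) := by rw [hdist]; ring
    _ ≤ (C₁ ^ l.length)⁻¹ * rhoSeq l x y t * h t x (applyList l y) := by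
        gcongr
        exact hlow t ht x _
    _ ≤ h t x y := hiter

/-- the iterated lower bound along an admissible sequence. -/
theorem iterated_lower_bound {N : ℕ} (R : Finset (Euc N)) (hR : IsNormalizedRootSystem R)
    (hG : Finite (coxeterGroup R)) (k : Euc N → ℝ) (hk : ∀ α ∈ R, 0 < k α)
    (h : ℝ → Euc N → Euc N → ℝ) (hpos : ∀ t, 0 < t → ∀ x y, 0 < h t x y)
    (cl Cl C₁ : ℝ) (hcl : 0 < cl) (hCl : 0 < Cl) (hC₁ : 1 ≤ C₁)
    (hlow : ∀ t, 0 < t → ∀ x y : Euc N,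
      Cl * (wBall R k x (Real.sqrt t))⁻¹ * Real.exp (-cl * ‖x - y‖ ^ 2 / t) ≤ h t x y)
    (hrefl : ∀ t, 0 < t → ∀ x y : Euc N, ∀ α ∈ R,
      C₁⁻¹ * ((1 + ‖x - y‖ / Real.sqrt t) ^ 2)⁻¹ * h t x (sigmaRefl α y) ≤ h t x y) :
    ∀ t, 0 < t → ∀ x y : Euc N, ∀ l : List (Euc N), (∀ a ∈ l, a ∈ R) →
      orbDist (coxeterGroup R) x (applyList l y) = ‖x - applyList l y‖ →
      (C₁ ^ l.length)⁻¹ * rhoSeq l x y t * h t x (applyList l y) ≤ h t x y ∧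
      (C₁ ^ l.length)⁻¹ * Cl * (wBall R k x (Real.sqrt t))⁻¹ *
        Real.exp (-cl * (orbDist (coxeterGroup R) x y) ^ 2 / t) * rhoSeq l x y t
        ≤ h t x y :=
  iterated_lower_bound_general R k h cl Cl C₁ hC₁ hlow hrefl
end
end
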